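/- arXiv:2509.14845 — 5 statements merged into one kernel-verified Lean document; each statement's English description precedes it below -/
import Mathlib

section
/- For any real numbers y ≥ 0 and b > -1, there exist positive constants c₁, c₂ (depending only on b) such that c₁ · e^y · (y+1)^{-b-1} ≤ ∫₀¹ e^{ys} (1-s)^b ds ≤ c₂ · e^y · (y+1)^{-b-1}. -/
open MeasureTheory Real Set

/-! The substitution `s ↦ 1 - s` turns the integral into `e^y ∫₀¹ x^b e^{-yx} dx`, whose
mass lives on the scale `x ≈ 1/(y+1)`. Restricting to `[0, 1/(y+1)]`, where `e^{-yx} ≥ e⁻¹`,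
gives the lower bound; the pointwise bound `e^{-yx} ≤ e · e^{-(y+1)x}` on `[0, 1]` compares
the integral with `∫₀^∞ x^b e^{-(y+1)x} dx = Γ(b+1) (y+1)^{-b-1}`, giving the upper bound. -/

lemma setIntegral_Ioo_exp_mul_mul_one_sub_rpow (b y : ℝ) :
    ∫ s in Ioo (0:ℝ) 1, exp (y * s) * (1 - s) ^ b
      = exp y * ∫ x in (0:ℝ)..1, x ^ b * exp (-(y * x)) := by
  rw [← integral_Ioc_eq_integral_Ioo, ← intervalIntegral.integral_of_le zero_le_one]
  have hsub := intervalIntegral.integral_comp_sub_left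
    (fun s => exp (y * s) * (1 - s) ^ b) 1 (a := 0) (b := 1)
  simp only [sub_zero, sub_self] at hsub
  rw [← hsub, ← intervalIntegral.integral_const_mul]
  congr 1 with x
  rw [show y * (1 - x) = y + -(y * x) by ring, exp_add, sub_sub_cancel]
  ring

lemma intervalIntegrable_rpow_mul_exp_neg_mul {b : ℝ} (hb : -1 < b) (y c : ℝ) :
    IntervalIntegrable (fun x => x ^ b * exp (-(y * x))) volume 0 c :=
  (intervalIntegral.intervalIntegrable_rpow' hb).mul_continuousOn (by fun_prop)

lemma le_integral_rpow_mul_exp_neg_mul {b y : ℝ} (hb : -1 < b) (hy : 0 ≤ y) :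
    (exp 1 * (b + 1))⁻¹ * (y + 1) ^ (-b - 1) ≤
      ∫ x in (0:ℝ)..1, x ^ b * exp (-(y * x)) := by
  have hy1 : 0 < y + 1 := by linarith
  set δ := (y + 1)⁻¹ with hδ
  have hδ0 : 0 < δ := by positivity
  have hδ1 : δ ≤ 1 := inv_le_one_of_one_le₀ (by linarith)
  have hδpow : δ ^ (b + 1) = (y + 1) ^ (-b - 1) := by
    rw [hδ, inv_rpow hy1.le, ← rpow_neg hy1.le, neg_add']
  calc (exp 1 * (b + 1))⁻¹ * (y + 1) ^ (-b - 1)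
      = ∫ x in (0:ℝ)..δ, x ^ b * exp (-1) := by
        rw [intervalIntegral.integral_mul_const, integral_rpow (Or.inl hb),
          zero_rpow (by linarith), hδpow, exp_neg, mul_inv]
        ring
    _ ≤ ∫ x in (0:ℝ)..δ, x ^ b * exp (-(y * x)) := by
        refine intervalIntegral.integral_mono_on hδ0.le
          ((intervalIntegral.intervalIntegrable_rpow' hb).mul_const _)
          (intervalIntegrable_rpow_mul_exp_neg_mul hb y δ) fun x hx => ?_
        have hyx : y * x ≤ 1 := by
          calc y * x ≤ y * δ := mul_le_mul_of_nonneg_left hx.2 hy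
            _ ≤ 1 := by rw [hδ, mul_inv_le_iff₀ hy1]; linarith
        have := rpow_nonneg hx.1 b
        gcongr
    _ ≤ ∫ x in (0:ℝ)..1, x ^ b * exp (-(y * x)) := by
        refine intervalIntegral.integral_mono_interval le_rfl hδ0.le hδ1 ?_
          (intervalIntegrable_rpow_mul_exp_neg_mul hb y 1)
        filter_upwards [ae_restrict_mem measurableSet_Ioc] with x hx
        have := rpow_nonneg hx.1.le b
        positivity

lemma integral_rpow_mul_exp_neg_mul_le {b y : ℝ} (hb : -1 < b) (hy : -1 < y) :
    ∫ x in (0:ℝ)..1, x ^ b * exp (-(y * x)) ≤ exp 1 * Gamma (b + 1) * (y + 1) ^ (-b - 1) := by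
  have hy1 : 0 < y + 1 := by linarith
  have hGamma := integral_rpow_mul_exp_neg_mul_Ioi (a := b + 1) (by linarith) hy1
  simp only [add_sub_cancel_right] at hGamma
  have hGamma_pos : 0 < Gamma (b + 1) := Gamma_pos_of_pos (by linarith)
  have hint : IntegrableOn (fun x => x ^ b * exp (-((y + 1) * x))) (Ioi 0) :=
    .of_integral_ne_zero (by rw [hGamma]; positivity)
  rw [intervalIntegral.integral_of_le zero_le_one]
  calc ∫ x in Ioc (0:ℝ) 1, x ^ b * exp (-(y * x))
      ≤ ∫ x in Ioc (0:ℝ) 1, exp 1 * (x ^ b * exp (-((y + 1) * x))) := by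
        refine setIntegral_mono_on
          ((intervalIntegrable_iff_integrableOn_Ioc_of_le zero_le_one).1
            (intervalIntegrable_rpow_mul_exp_neg_mul hb y 1))
          ((hint.mono_set Ioc_subset_Ioi_self).const_mul _) measurableSet_Ioc fun x hx => ?_
        have := rpow_nonneg hx.1.le b
        rw [mul_left_comm, ← exp_add]
        gcongr
        nlinarith [hx.2]
    _ ≤ ∫ x in Ioi (0:ℝ), exp 1 * (x ^ b * exp (-((y + 1) * x))) := by
        refine setIntegral_mono_set (hint.const_mul _) ?_ Ioc_subset_Ioi_self.eventuallyLE
        filter_upwards [ae_restrict_mem measurableSet_Ioi] with x hx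
        have := rpow_nonneg hx.le b
        positivity
    _ = exp 1 * Gamma (b + 1) * (y + 1) ^ (-b - 1) := by
        rw [integral_const_mul, hGamma, one_div, inv_rpow hy1.le, ← rpow_neg hy1.le, neg_add']
        ring

/-- For any `y ≥ 0` and `b > -1`, there exist positive constants `c₁, c₂` depending only
on `b` such that `c₁ e^y (y+1)^{-b-1} ≤ ∫₀¹ e^{ys} (1-s)^b ds ≤ c₂ e^y (y+1)^{-b-1}`. -/
theorem stmt0 (b : ℝ) (hb : -1 < b) :
    ∃ c₁ c₂ : ℝ, 0 < c₁ ∧ 0 < c₂ ∧ ∀ y : ℝ, 0 ≤ y →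
      c₁ * Real.exp y * (y + 1) ^ (-b - 1) ≤
        (∫ s in Set.Ioo (0:ℝ) 1, Real.exp (y * s) * (1 - s) ^ b) ∧
      (∫ s in Set.Ioo (0:ℝ) 1, Real.exp (y * s) * (1 - s) ^ b) ≤
        c₂ * Real.exp y * (y + 1) ^ (-b - 1) := by
  have hb1 : 0 < b + 1 := by linarith
  have hGamma : 0 < Gamma (b + 1) := Gamma_pos_of_pos hb1
  refine ⟨(exp 1 * (b + 1))⁻¹, exp 1 * Gamma (b + 1), by positivity, by positivity,
    fun y hy => ?_⟩
  rw [setIntegral_Ioo_exp_mul_mul_one_sub_rpow]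
  constructor
  · calc (exp 1 * (b + 1))⁻¹ * exp y * (y + 1) ^ (-b - 1)
        = exp y * ((exp 1 * (b + 1))⁻¹ * (y + 1) ^ (-b - 1)) := by ring
      _ ≤ _ := by gcongr; exact le_integral_rpow_mul_exp_neg_mul hb hy
  · calc exp y * ∫ x in (0:ℝ)..1, x ^ b * exp (-(y * x))
        ≤ exp y * (exp 1 * Gamma (b + 1) * (y + 1) ^ (-b - 1)) := by
          gcongr; exact integral_rpow_mul_exp_neg_mul_le hb (by linarith)
      _ = _ := by ring
end

section
/- Let s ∈ (0,1) and α ∈ (0, 2s) with 1 + α > 2s. Then for all 0 < δ₁ ≤ δ₂ ≤ 1, there exist positive constants c₁, c₂ (depending only on s and α) such that c₁ · δ₁^{α-2s} δ₂^{-α} ≤ ∫₀¹ min{ρ/δ₁, 1} · (min{ρ/δ₂, 1})^α · ρ^{-1-2s} dρ ≤ c₂ · δ₁^{α-2s} δ₂^{-α}. -/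
/-!
Split `(0, 1)` at `δ₁ ≤ δ₂`. The integrand is at most `δ₁⁻¹ δ₂^{-α} ρ^{α-2s}` on `(0, δ₁)`, which is
integrable because `α - 2s > -1`; at most `δ₂^{-α} ρ^{α-1-2s}` on `(δ₁, δ₂)` and at most `ρ^{-1-2s}`
on `(δ₂, 1)`, where both exponents are `< -1`, so each integral is controlled by its lower endpoint.
All three pieces are `O(δ₁^{α-2s} δ₂^{-α})`. Conversely, on `(δ₁/2, δ₁)` every factor of the
integrand is comparable to its value at `δ₁`, which gives the lower bound.
-/

open MeasureTheory Real Set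

lemma integral_rpow_le_of_lt_neg_one {p a b : ℝ} (hp : p < -1) (ha : 0 < a) (hab : a ≤ b) :
    ∫ x in a..b, x ^ p ≤ a ^ (p + 1) / -(p + 1) := by
  have h0 : (0 : ℝ) ∉ uIcc a b := by
    rw [uIcc_of_le hab]
    exact fun h => ha.not_ge h.1
  rw [integral_rpow (Or.inr ⟨hp.ne, h0⟩), ← neg_div_neg_eq, neg_sub]
  gcongr
  · linarith
  · exact sub_le_self _ (rpow_nonneg (ha.le.trans hab) _)

noncomputable def interactionDensity (s α δ₁ δ₂ ρ : ℝ) : ℝ :=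
  min (ρ / δ₁) 1 * (min (ρ / δ₂) 1) ^ α * ρ ^ (-1 - 2 * s)

section Pointwise

variable {s α δ₁ δ₂ ρ : ℝ}

lemma interactionDensity_nonneg (hδ₁ : 0 ≤ δ₁) (hδ₂ : 0 ≤ δ₂) (hρ : 0 ≤ ρ) :
    0 ≤ interactionDensity s α δ₁ δ₂ ρ := by
  unfold interactionDensity
  positivity

lemma interactionDensity_le_inner (hα : 0 ≤ α) (hδ₁ : 0 < δ₁) (hδ₂ : 0 < δ₂) (hρ : 0 < ρ) :
    interactionDensity s α δ₁ δ₂ ρ ≤ δ₁⁻¹ * δ₂ ^ (-α) * ρ ^ (α - 2 * s) := by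
  calc interactionDensity s α δ₁ δ₂ ρ ≤ ρ / δ₁ * (ρ / δ₂) ^ α * ρ ^ (-1 - 2 * s) := by
        unfold interactionDensity
        gcongr <;> exact min_le_left _ _
    _ = δ₁⁻¹ * δ₂ ^ (-α) * ρ ^ (α - 2 * s) := by
        rw [div_rpow hρ.le hδ₂.le, rpow_neg hδ₂.le,
          show α - 2 * s = 1 + (α + (-1 - 2 * s)) by ring, rpow_add hρ, rpow_add hρ, rpow_one]
        field_simp

lemma interactionDensity_le_middle (hα : 0 ≤ α) (hδ₂ : 0 < δ₂) (hρ : 0 < ρ) :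
    interactionDensity s α δ₁ δ₂ ρ ≤ δ₂ ^ (-α) * ρ ^ (α - 1 - 2 * s) := by
  calc interactionDensity s α δ₁ δ₂ ρ ≤ 1 * (ρ / δ₂) ^ α * ρ ^ (-1 - 2 * s) := by
        unfold interactionDensity
        gcongr
        · exact min_le_right _ _
        · exact min_le_left _ _
    _ = δ₂ ^ (-α) * ρ ^ (α - 1 - 2 * s) := by
        rw [one_mul, div_rpow hρ.le hδ₂.le, rpow_neg hδ₂.le,
          show α - 1 - 2 * s = α + (-1 - 2 * s) by ring, rpow_add hρ]
        field_simp

lemma interactionDensity_le_outer (hα : 0 ≤ α) (hδ₂ : 0 ≤ δ₂) (hρ : 0 ≤ ρ) :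
    interactionDensity s α δ₁ δ₂ ρ ≤ ρ ^ (-1 - 2 * s) := by
  have hmin : 0 ≤ min (ρ / δ₂) 1 := by positivity
  unfold interactionDensity
  calc min (ρ / δ₁) 1 * (min (ρ / δ₂) 1) ^ α * ρ ^ (-1 - 2 * s) ≤ 1 * 1 * ρ ^ (-1 - 2 * s) := by
        gcongr
        · exact min_le_right _ _
        · exact rpow_le_one hmin (min_le_right _ _) hα
    _ = ρ ^ (-1 - 2 * s) := by ring

lemma le_interactionDensity (hs : 0 ≤ s) (hα : 0 ≤ α) (hδ₁ : 0 < δ₁) (hδ₁₂ : δ₁ ≤ δ₂)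
    (hρ : ρ ∈ Icc (δ₁ / 2) δ₁) :
    1 / 2 * (δ₁ / (2 * δ₂)) ^ α * δ₁ ^ (-1 - 2 * s) ≤ interactionDensity s α δ₁ δ₂ ρ := by
  obtain ⟨hρ₁, hρ₂⟩ := hρ
  have hρ : 0 < ρ := by linarith
  have hδ₂ : 0 < δ₂ := hδ₁.trans_le hδ₁₂
  have h₁ : 1 / 2 ≤ min (ρ / δ₁) 1 := by
    rw [le_min_iff, le_div_iff₀ hδ₁]
    constructor <;> linarith
  have h₂ : δ₁ / (2 * δ₂) ≤ min (ρ / δ₂) 1 := by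
    rw [le_min_iff, div_le_div_iff₀ (by positivity) hδ₂, div_le_one (by positivity)]
    constructor <;> nlinarith
  have h₃ : δ₁ ^ (-1 - 2 * s) ≤ ρ ^ (-1 - 2 * s) := rpow_le_rpow_of_nonpos hρ hρ₂ (by linarith)
  unfold interactionDensity
  gcongr ?_ * ?_ ^ α * ?_

end Pointwise

section Integral

variable {s α δ₁ δ₂ : ℝ}

lemma intervalIntegrable_interactionDensity (hα : 0 ≤ α) (hsα : 2 * s < 1 + α) (hδ₁ : 0 < δ₁)
    (hδ₂ : 0 < δ₂) {b : ℝ} (hb : 0 ≤ b) :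
    IntervalIntegrable (interactionDensity s α δ₁ δ₂) volume 0 b := by
  have hbound : IntervalIntegrable (fun ρ => δ₁⁻¹ * δ₂ ^ (-α) * ρ ^ (α - 2 * s)) volume 0 b :=
    (intervalIntegral.intervalIntegrable_rpow' (by linarith)).const_mul _
  refine hbound.mono_fun' (by unfold interactionDensity; fun_prop) ?_
  rw [uIoc_of_le hb, Filter.EventuallyLE, ae_restrict_iff' measurableSet_Ioc]
  refine Filter.Eventually.of_forall fun ρ hρ => ?_
  rw [Real.norm_of_nonneg (interactionDensity_nonneg hδ₁.le hδ₂.le hρ.1.le)]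
  exact interactionDensity_le_inner hα hδ₁ hδ₂ hρ.1

lemma le_integral_interactionDensity (hs : 0 ≤ s) (hα : 0 ≤ α) (hsα : 2 * s < 1 + α)
    (hδ₁ : 0 < δ₁) (hδ₁₂ : δ₁ ≤ δ₂) (hδ₂ : δ₂ ≤ 1) :
    2 ^ (-α) / 4 * (δ₁ ^ (α - 2 * s) * δ₂ ^ (-α)) ≤
      ∫ ρ in Ioo 0 1, interactionDensity s α δ₁ δ₂ ρ := by
  have hδ₂pos : 0 < δ₂ := hδ₁.trans_le hδ₁₂
  have hint : IntegrableOn (interactionDensity s α δ₁ δ₂) (Ioo 0 1) :=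
    ((intervalIntegrable_interactionDensity hα hsα hδ₁ hδ₂pos zero_le_one).1).mono_set
      Ioo_subset_Ioc_self
  have hsub : Ioo (δ₁ / 2) δ₁ ⊆ Ioo 0 1 := Ioo_subset_Ioo (by positivity) (hδ₁₂.trans hδ₂)
  have hpow : δ₁ ^ (α - 2 * s) = δ₁ ^ α * δ₁ ^ (-1 - 2 * s) * δ₁ := by
    rw [← rpow_add hδ₁, ← rpow_add_one hδ₁.ne']
    ring_nf
  have hquot : (δ₁ / (2 * δ₂)) ^ α = δ₁ ^ α * (2 ^ (-α) * δ₂ ^ (-α)) := by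
    rw [div_rpow hδ₁.le (by positivity), mul_rpow zero_le_two hδ₂pos.le, rpow_neg zero_le_two,
      rpow_neg hδ₂pos.le, div_eq_mul_inv, mul_inv]
  calc 2 ^ (-α) / 4 * (δ₁ ^ (α - 2 * s) * δ₂ ^ (-α))
      = 1 / 2 * (δ₁ / (2 * δ₂)) ^ α * δ₁ ^ (-1 - 2 * s) * volume.real (Ioo (δ₁ / 2) δ₁) := by
        rw [volume_real_Ioo_of_le (by linarith), hpow, hquot]
        ring
    _ ≤ ∫ ρ in Ioo (δ₁ / 2) δ₁, interactionDensity s α δ₁ δ₂ ρ :=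
        setIntegral_ge_of_const_le_real measurableSet_Ioo (by simp)
          (fun ρ hρ => le_interactionDensity hs hα hδ₁ hδ₁₂ (Ioo_subset_Icc_self hρ))
          (hint.mono_set hsub)
    _ ≤ ∫ ρ in Ioo 0 1, interactionDensity s α δ₁ δ₂ ρ := by
        refine setIntegral_mono_set hint ?_ hsub.eventuallyLE
        rw [Filter.EventuallyLE, ae_restrict_iff' measurableSet_Ioo]
        exact Filter.Eventually.of_forall fun ρ hρ =>
          interactionDensity_nonneg hδ₁.le hδ₂pos.le hρ.1.le

lemma integral_interactionDensity_inner_le (hα : 0 ≤ α) (hsα : 2 * s < 1 + α) (hδ₁ : 0 < δ₁)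
    (hδ₂ : 0 < δ₂) :
    ∫ ρ in 0..δ₁, interactionDensity s α δ₁ δ₂ ρ ≤ δ₁ ^ (α - 2 * s) * δ₂ ^ (-α) / (1 + α - 2 * s) := by
  have hexp : -1 < α - 2 * s := by linarith
  calc ∫ ρ in 0..δ₁, interactionDensity s α δ₁ δ₂ ρ
      ≤ ∫ ρ in 0..δ₁, δ₁⁻¹ * δ₂ ^ (-α) * ρ ^ (α - 2 * s) :=
        intervalIntegral.integral_mono_on_of_le_Ioo hδ₁.le
          (intervalIntegrable_interactionDensity hα hsα hδ₁ hδ₂ hδ₁.le)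
          ((intervalIntegral.intervalIntegrable_rpow' hexp).const_mul _)
          (fun ρ hρ => interactionDensity_le_inner hα hδ₁ hδ₂ hρ.1)
    _ = δ₁ ^ (α - 2 * s) * δ₂ ^ (-α) / (1 + α - 2 * s) := by
        rw [intervalIntegral.integral_const_mul, integral_rpow (Or.inl hexp),
          zero_rpow (by linarith), sub_zero, rpow_add_one hδ₁.ne',
          show α - 2 * s + 1 = 1 + α - 2 * s by ring]
        field_simp

lemma integral_interactionDensity_middle_le (hα : 0 ≤ α) (hsα : α < 2 * s) (hδ₁ : 0 < δ₁)
    (hδ₁₂ : δ₁ ≤ δ₂) (hint : IntervalIntegrable (interactionDensity s α δ₁ δ₂) volume δ₁ δ₂) :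
    ∫ ρ in δ₁..δ₂, interactionDensity s α δ₁ δ₂ ρ ≤ δ₁ ^ (α - 2 * s) * δ₂ ^ (-α) / (2 * s - α) := by
  have hδ₂ : 0 < δ₂ := hδ₁.trans_le hδ₁₂
  have h0 : (0 : ℝ) ∉ uIcc δ₁ δ₂ := by
    rw [uIcc_of_le hδ₁₂]
    exact fun h => hδ₁.not_ge h.1
  calc ∫ ρ in δ₁..δ₂, interactionDensity s α δ₁ δ₂ ρ
      ≤ ∫ ρ in δ₁..δ₂, δ₂ ^ (-α) * ρ ^ (α - 1 - 2 * s) :=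
        intervalIntegral.integral_mono_on_of_le_Ioo hδ₁₂ hint
          ((intervalIntegral.intervalIntegrable_rpow (Or.inr h0)).const_mul _)
          (fun ρ hρ => interactionDensity_le_middle hα hδ₂ (hδ₁.trans hρ.1))
    _ = δ₂ ^ (-α) * ∫ ρ in δ₁..δ₂, ρ ^ (α - 1 - 2 * s) := intervalIntegral.integral_const_mul _ _
    _ ≤ δ₂ ^ (-α) * (δ₁ ^ (α - 1 - 2 * s + 1) / -(α - 1 - 2 * s + 1)) := by
        gcongr
        exact integral_rpow_le_of_lt_neg_one (by linarith) hδ₁ hδ₁₂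
    _ = δ₁ ^ (α - 2 * s) * δ₂ ^ (-α) / (2 * s - α) := by
        rw [show α - 1 - 2 * s + 1 = α - 2 * s by ring]
        ring

lemma integral_interactionDensity_outer_le (hs : 0 < s) (hα : 0 ≤ α) (hsα : α < 2 * s)
    (hδ₁ : 0 < δ₁) (hδ₁₂ : δ₁ ≤ δ₂) (hδ₂ : δ₂ ≤ 1)
    (hint : IntervalIntegrable (interactionDensity s α δ₁ δ₂) volume δ₂ 1) :
    ∫ ρ in δ₂..1, interactionDensity s α δ₁ δ₂ ρ ≤ δ₁ ^ (α - 2 * s) * δ₂ ^ (-α) / (2 * s) := by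
  have hδ₂pos : 0 < δ₂ := hδ₁.trans_le hδ₁₂
  have h0 : (0 : ℝ) ∉ uIcc δ₂ 1 := by
    rw [uIcc_of_le hδ₂]
    exact fun h => hδ₂pos.not_ge h.1
  calc ∫ ρ in δ₂..1, interactionDensity s α δ₁ δ₂ ρ
      ≤ ∫ ρ in δ₂..1, ρ ^ (-1 - 2 * s) :=
        intervalIntegral.integral_mono_on_of_le_Ioo hδ₂ hint
          (intervalIntegral.intervalIntegrable_rpow (Or.inr h0))
          (fun ρ hρ => interactionDensity_le_outer hα hδ₂pos.le (hδ₂pos.trans hρ.1).le)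
    _ ≤ δ₂ ^ (-1 - 2 * s + 1) / -(-1 - 2 * s + 1) :=
        integral_rpow_le_of_lt_neg_one (by linarith) hδ₂pos hδ₂
    _ = δ₂ ^ (α - 2 * s) * δ₂ ^ (-α) / (2 * s) := by
        rw [← rpow_add hδ₂pos]
        ring_nf
    _ ≤ δ₁ ^ (α - 2 * s) * δ₂ ^ (-α) / (2 * s) := by
        gcongr ?_ * _ / _
        exact rpow_le_rpow_of_nonpos hδ₁ hδ₁₂ (by linarith)

lemma integral_interactionDensity_le (hs : 0 < s) (hα : 0 ≤ α) (hα₁ : α < 2 * s)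
    (hα₂ : 2 * s < 1 + α) (hδ₁ : 0 < δ₁) (hδ₁₂ : δ₁ ≤ δ₂) (hδ₂ : δ₂ ≤ 1) :
    ∫ ρ in Ioo 0 1, interactionDensity s α δ₁ δ₂ ρ ≤
      (1 / (1 + α - 2 * s) + 1 / (2 * s - α) + 1 / (2 * s)) * (δ₁ ^ (α - 2 * s) * δ₂ ^ (-α)) := by
  have hδ₂pos : 0 < δ₂ := hδ₁.trans_le hδ₁₂
  have hint {b : ℝ} (hb : 0 ≤ b) : IntervalIntegrable (interactionDensity s α δ₁ δ₂) volume 0 b :=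
    intervalIntegrable_interactionDensity hα hα₂ hδ₁ hδ₂pos hb
  have hsplit : ∫ ρ in Ioo 0 1, interactionDensity s α δ₁ δ₂ ρ =
      (∫ ρ in 0..δ₁, interactionDensity s α δ₁ δ₂ ρ) +
        (∫ ρ in δ₁..δ₂, interactionDensity s α δ₁ δ₂ ρ) +
        ∫ ρ in δ₂..1, interactionDensity s α δ₁ δ₂ ρ := by
    rw [← integral_Ioc_eq_integral_Ioo, ← intervalIntegral.integral_of_le zero_le_one,
      intervalIntegral.integral_add_adjacent_intervals (hint hδ₁.le)
        ((hint hδ₁.le).symm.trans (hint hδ₂pos.le)),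
      intervalIntegral.integral_add_adjacent_intervals (hint hδ₂pos.le)
        ((hint hδ₂pos.le).symm.trans (hint zero_le_one))]
  rw [hsplit]
  calc _ ≤ δ₁ ^ (α - 2 * s) * δ₂ ^ (-α) / (1 + α - 2 * s) +
        δ₁ ^ (α - 2 * s) * δ₂ ^ (-α) / (2 * s - α) + δ₁ ^ (α - 2 * s) * δ₂ ^ (-α) / (2 * s) := by
        gcongr
        · exact integral_interactionDensity_inner_le hα hα₂ hδ₁ hδ₂pos
        · exact integral_interactionDensity_middle_le hα hα₁ hδ₁ hδ₁₂
            ((hint hδ₁.le).symm.trans (hint hδ₂pos.le))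
        · exact integral_interactionDensity_outer_le hs hα hα₁ hδ₁ hδ₁₂ hδ₂
            ((hint hδ₂pos.le).symm.trans (hint zero_le_one))
    _ = _ := by ring

end Integral

theorem stmt4_general (s α : ℝ) (hα0 : 0 < α) (hα1 : α < 2 * s)
    (hα2 : 2 * s < 1 + α) :
    ∃ c₁ c₂ : ℝ, 0 < c₁ ∧ 0 < c₂ ∧ ∀ δ₁ δ₂ : ℝ, 0 < δ₁ → δ₁ ≤ δ₂ → δ₂ ≤ 1 →
      c₁ * (δ₁ ^ (α - 2 * s) * δ₂ ^ (-α)) ≤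
        (∫ ρ in Set.Ioo (0:ℝ) 1, min (ρ / δ₁) 1 * (min (ρ / δ₂) 1) ^ α * ρ ^ (-1 - 2 * s)) ∧
      (∫ ρ in Set.Ioo (0:ℝ) 1, min (ρ / δ₁) 1 * (min (ρ / δ₂) 1) ^ α * ρ ^ (-1 - 2 * s)) ≤
        c₂ * (δ₁ ^ (α - 2 * s) * δ₂ ^ (-α)) := by
  have hs : 0 < s := by linarith
  have hc₂ : 0 < 1 / (1 + α - 2 * s) + 1 / (2 * s - α) + 1 / (2 * s) := by
    have : 0 < 1 + α - 2 * s := by linarith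
    have : 0 < 2 * s - α := by linarith
    positivity
  exact ⟨2 ^ (-α) / 4, _, by positivity, hc₂, fun δ₁ δ₂ hδ₁ hδ₁₂ hδ₂ =>
    ⟨le_integral_interactionDensity hs.le hα0.le hα2 hδ₁ hδ₁₂ hδ₂,
      integral_interactionDensity_le hs hα0.le hα1 hα2 hδ₁ hδ₁₂ hδ₂⟩⟩

/-- Two-sided bound for the interaction of two scale-truncated singular weights:
`∫₀¹ min{ρ/δ₁,1} min{ρ/δ₂,1}^α ρ^{-1-2s} dρ ∼ δ₁^{α-2s} δ₂^{-α}` for `0 < δ₁ ≤ δ₂ ≤ 1`. -/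
theorem stmt4 (s α : ℝ) (hs : s ∈ Set.Ioo (0:ℝ) 1) (hα0 : 0 < α) (hα1 : α < 2 * s)
    (hα2 : 2 * s < 1 + α) :
    ∃ c₁ c₂ : ℝ, 0 < c₁ ∧ 0 < c₂ ∧ ∀ δ₁ δ₂ : ℝ, 0 < δ₁ → δ₁ ≤ δ₂ → δ₂ ≤ 1 →
      c₁ * (δ₁ ^ (α - 2 * s) * δ₂ ^ (-α)) ≤
        (∫ ρ in Set.Ioo (0:ℝ) 1, min (ρ / δ₁) 1 * (min (ρ / δ₂) 1) ^ α * ρ ^ (-1 - 2 * s)) ∧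
      (∫ ρ in Set.Ioo (0:ℝ) 1, min (ρ / δ₁) 1 * (min (ρ / δ₂) 1) ^ α * ρ ^ (-1 - 2 * s)) ≤
        c₂ * (δ₁ ^ (α - 2 * s) * δ₂ ^ (-α)) :=
  stmt4_general s α hα0 hα1 hα2
end

section
/- Let η ≥ 0 and let f: ℝᵈ → ℝ be a measurable function such that M(f) := ∫_{ℝᵈ} |f(z)| dz + sup_{z ∈ ℝᵈ} ⟨z⟩^η ∫_{|w| ≥ |z|} |f(w)| dw is finite, where ⟨z⟩ = sqrt(1 + |z|²). Then for any λ ≥ 0 and any z ∈ ℝᵈ, ∫_{ℝᵈ} |f(z - w)| · ⟨λ + |w|⟩^{-η} dw ≤ C · ⟨λ + |z|⟩^{-η} · M(f), where C depends only on η and d. -/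
/-!
Split the integral at `‖w‖ = ‖z‖ / 2`. Where `‖w‖ ≥ ‖z‖ / 2` the weight `⟨λ + |w|⟩^{-η}` is
comparable to `⟨λ + |z|⟩^{-η}`, and `∫ |f(z - ·)| = ‖f‖_{L¹}`. Where `‖w‖ < ‖z‖ / 2` we have
`‖z - w‖ > ‖z‖ / 2`, so that part only sees the tail of `f` beyond `‖z‖ / 2`, which is
`≤ K ⟨|z|/2⟩^{-η}`; bounding the weight by `⟨λ⟩^{-η}` and using Peetre's inequality
`⟨λ + |z|⟩ ≤ √2 ⟨λ⟩ ⟨|z|⟩ ≤ 2√2 ⟨λ⟩ ⟨|z|/2⟩` gives the required decay.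
-/

open MeasureTheory Real Set

lemma rpow_neg_le_of_le_mul {x y c η : ℝ} (hη : 0 ≤ η) (hx : 0 < x) (hc : 0 < c)
    (h : x ≤ c * y) : y ^ (-η) ≤ c ^ η * x ^ (-η) := by
  have hy : 0 < y := pos_of_mul_pos_right (hx.trans_le h) hc.le
  calc y ^ (-η) = c ^ η * (c * y) ^ (-η) := by
        rw [mul_rpow hc.le hy.le, rpow_neg hc.le, ← mul_assoc,
          mul_inv_cancel₀ (rpow_pos_of_pos hc η).ne', one_mul]
    _ ≤ c ^ η * x ^ (-η) :=
        mul_le_mul_of_nonneg_left (rpow_le_rpow_of_nonpos hx h (neg_nonpos.2 hη)) (by positivity)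

lemma le_mul_rpow_neg_of_rpow_mul_le {a T K η : ℝ} (ha : 0 < a) (h : a ^ η * T ≤ K) :
    T ≤ K * a ^ (-η) := by
  rw [rpow_neg ha.le, ← div_eq_mul_inv, le_div_iff₀ (rpow_pos_of_pos ha η), mul_comm]
  exact h

lemma sqrt_one_add_sq_le_two_mul {x y : ℝ} (hx : 0 ≤ x) (h : x ≤ 2 * y) :
    √(1 + x ^ 2) ≤ 2 * √(1 + y ^ 2) := by
  rw [← abs_two, ← sqrt_sq_eq_abs, ← sqrt_mul (sq_nonneg 2)]
  exact sqrt_le_sqrt (by nlinarith)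

lemma sqrt_one_add_add_sq_le (a b : ℝ) :
    √(1 + (a + b) ^ 2) ≤ √2 * (√(1 + a ^ 2) * √(1 + b ^ 2)) := by
  rw [← sqrt_mul (by positivity), ← sqrt_mul zero_le_two]
  exact sqrt_le_sqrt (by nlinarith [sq_nonneg (a - b), sq_nonneg (a * b)])

lemma sqrt_one_add_sq_rpow_neg_le_one {η : ℝ} (hη : 0 ≤ η) (x : ℝ) :
    √(1 + x ^ 2) ^ (-η) ≤ 1 :=
  rpow_le_one_of_one_le_of_nonpos (one_le_sqrt.2 (by nlinarith [sq_nonneg x]))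
    (neg_nonpos.2 hη)

lemma sqrt_one_add_sq_rpow_neg_le_of_le {η : ℝ} (hη : 0 ≤ η) {x y : ℝ} (hx : 0 ≤ x)
    (hxy : x ≤ y) : √(1 + y ^ 2) ^ (-η) ≤ √(1 + x ^ 2) ^ (-η) :=
  rpow_le_rpow_of_nonpos (by positivity) (sqrt_le_sqrt (by nlinarith)) (neg_nonpos.2 hη)

lemma sqrt_one_add_sq_rpow_neg_le_of_le_two_mul {η : ℝ} (hη : 0 ≤ η) {x y : ℝ} (hx : 0 ≤ x)
    (h : x ≤ 2 * y) : √(1 + y ^ 2) ^ (-η) ≤ 2 ^ η * √(1 + x ^ 2) ^ (-η) :=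
  rpow_neg_le_of_le_mul hη (by positivity) two_pos (sqrt_one_add_sq_le_two_mul hx h)

lemma sqrt_one_add_sq_rpow_neg_mul_le {η : ℝ} (hη : 0 ≤ η) (a : ℝ) {b : ℝ} (hb : 0 ≤ b) :
    √(1 + a ^ 2) ^ (-η) * √(1 + (b / 2) ^ 2) ^ (-η) ≤
      (2 * √2) ^ η * √(1 + (a + b) ^ 2) ^ (-η) := by
  rw [← mul_rpow (by positivity) (by positivity)]
  refine rpow_neg_le_of_le_mul hη (by positivity) (by positivity) ?_
  calc √(1 + (a + b) ^ 2) ≤ √2 * (√(1 + a ^ 2) * √(1 + b ^ 2)) := sqrt_one_add_add_sq_le a b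
    _ ≤ √2 * (√(1 + a ^ 2) * (2 * √(1 + (b / 2) ^ 2))) := by
        gcongr; exact sqrt_one_add_sq_le_two_mul hb (by linarith)
    _ = 2 * √2 * (√(1 + a ^ 2) * √(1 + (b / 2) ^ 2)) := by ring

section Translation

variable {G : Type*} [AddGroup G] [MeasurableSpace G] [MeasurableAdd G] [MeasurableNeg G]
  {μ : Measure G} [μ.IsAddLeftInvariant] [μ.IsNegInvariant]

theorem setIntegral_comp_sub_left_le {g : G → ℝ} (hg : Integrable g μ) (hg0 : 0 ≤ g)
    {s t : Set G} {z : G} (hst : ∀ w ∈ s, z - w ∈ t) :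
    ∫ w in s, g (z - w) ∂μ ≤ ∫ u in t, g u ∂μ :=
  calc ∫ w in s, g (z - w) ∂μ ≤ ∫ w in (z - ·) ⁻¹' t, g (z - w) ∂μ :=
        setIntegral_mono_set (hg.comp_sub_left z).integrableOn (ae_of_all _ fun w => hg0 (z - w))
          (ae_of_all _ hst)
    _ = ∫ u in t, g u ∂μ :=
        (Measure.measurePreserving_sub_left μ z).setIntegral_preimage_emb
          (measurableEmbedding_subLeft z) g t

theorem setIntegral_comp_sub_left_mul_le {g W : G → ℝ} {c : ℝ} (hg : Integrable g μ)
    (hg0 : 0 ≤ g) (hW0 : 0 ≤ W) (hc : 0 ≤ c) {s t : Set G} (hs : MeasurableSet s)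
    (hWc : ∀ w ∈ s, W w ≤ c) {z : G} (hst : ∀ w ∈ s, z - w ∈ t) :
    ∫ w in s, g (z - w) * W w ∂μ ≤ c * ∫ u in t, g u ∂μ :=
  calc ∫ w in s, g (z - w) * W w ∂μ ≤ ∫ w in s, g (z - w) * c ∂μ :=
        integral_mono_of_nonneg (ae_of_all _ fun _ => mul_nonneg (hg0 _) (hW0 _))
          ((hg.comp_sub_left z).mul_const c).integrableOn
          (ae_restrict_of_forall_mem hs fun w hw => mul_le_mul_of_nonneg_left (hWc w hw) (hg0 _))
    _ = c * ∫ w in s, g (z - w) ∂μ := by rw [integral_mul_const, mul_comm]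
    _ ≤ c * ∫ u in t, g u ∂μ :=
        mul_le_mul_of_nonneg_left (setIntegral_comp_sub_left_le hg hg0 hst) hc

end Translation

section WeightedConvolution

variable {E : Type*} [NormedAddCommGroup E] [MeasurableSpace E] [BorelSpace E] {μ : Measure E}
  [μ.IsAddLeftInvariant] [μ.IsNegInvariant] {f : E → ℝ} {η : ℝ}

theorem integrable_abs_comp_sub_mul_rpow_neg (hf : Integrable f μ) (hη : 0 ≤ η) (l : ℝ) (z : E) :
    Integrable (fun w => |f (z - w)| * √(1 + (l + ‖w‖) ^ 2) ^ (-η)) μ :=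
  (hf.comp_sub_left z).abs.mul_bdd (by fun_prop : Measurable _).aestronglyMeasurable <|
    ae_of_all _ fun w => by
      rw [norm_of_nonneg (by positivity)]
      exact sqrt_one_add_sq_rpow_neg_le_one hη _

theorem setIntegral_weightedConv_near_le (hf : Integrable f μ) (hη : 0 ≤ η) {l : ℝ} (hl : 0 ≤ l)
    (z : E) :
    ∫ w in {w | ‖z‖ / 2 ≤ ‖w‖}, |f (z - w)| * √(1 + (l + ‖w‖) ^ 2) ^ (-η) ∂μ ≤
      2 ^ η * √(1 + (l + ‖z‖) ^ 2) ^ (-η) * ∫ u, |f u| ∂μ := by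
  have hweight : ∀ w ∈ {w : E | ‖z‖ / 2 ≤ ‖w‖},
      √(1 + (l + ‖w‖) ^ 2) ^ (-η) ≤ 2 ^ η * √(1 + (l + ‖z‖) ^ 2) ^ (-η) :=
    fun w (hw : ‖z‖ / 2 ≤ ‖w‖) =>
      sqrt_one_add_sq_rpow_neg_le_of_le_two_mul hη (by positivity) (by linarith)
  simpa only [setIntegral_univ] using setIntegral_comp_sub_left_mul_le hf.abs
    (fun u => abs_nonneg (f u)) (fun w => by positivity) (by positivity)
    (measurableSet_le measurable_const measurable_norm) hweight (fun w _ => mem_univ (z - w))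

theorem setIntegral_weightedConv_far_le (hf : Integrable f μ) (hη : 0 ≤ η) {l : ℝ} (hl : 0 ≤ l)
    (z : E) :
    ∫ w in {w | ‖z‖ / 2 ≤ ‖w‖}ᶜ, |f (z - w)| * √(1 + (l + ‖w‖) ^ 2) ^ (-η) ∂μ ≤
      √(1 + l ^ 2) ^ (-η) * ∫ u in {u | ‖z‖ / 2 ≤ ‖u‖}, |f u| ∂μ := by
  refine setIntegral_comp_sub_left_mul_le hf.abs (fun u => abs_nonneg (f u))
    (fun w => by positivity) (by positivity)
    (measurableSet_le measurable_const measurable_norm).compl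
    (fun w _ => sqrt_one_add_sq_rpow_neg_le_of_le hη hl (le_add_of_nonneg_right (norm_nonneg w)))
    (fun w (hw : ¬ ‖z‖ / 2 ≤ ‖w‖) => ?_)
  change ‖z‖ / 2 ≤ ‖z - w‖
  linarith [norm_sub_norm_le z w]

end WeightedConvolution

/-- Weighted convolution estimate: if `f` is integrable and the weighted tail integrals
`⟨z⟩^η ∫_{|w|≥|z|} |f|` are bounded by `K`, then
`∫ |f(z-w)| ⟨λ+|w|⟩^{-η} dw ≤ C ⟨λ+|z|⟩^{-η} (‖f‖_{L¹} + K)`. -/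
theorem stmt6 (d : ℕ) (η : ℝ) (hη : 0 ≤ η) :
    ∃ C : ℝ, 0 < C ∧
      ∀ f : EuclideanSpace ℝ (Fin d) → ℝ, Integrable f →
      ∀ K : ℝ,
        (∀ z : EuclideanSpace ℝ (Fin d),
          Real.sqrt (1 + ‖z‖ ^ 2) ^ η *
            (∫ w in {w : EuclideanSpace ℝ (Fin d) | ‖z‖ ≤ ‖w‖}, |f w|) ≤ K) →
      ∀ l : ℝ, 0 ≤ l → ∀ z : EuclideanSpace ℝ (Fin d),
        (∫ w, |f (z - w)| * Real.sqrt (1 + (l + ‖w‖) ^ 2) ^ (-η)) ≤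
          C * Real.sqrt (1 + (l + ‖z‖) ^ 2) ^ (-η) * ((∫ w, |f w|) + K) := by
  refine ⟨2 ^ η + (2 * √2) ^ η, by positivity, fun f hf K hK l hl z => ?_⟩
  set W := √(1 + (l + ‖z‖) ^ 2) ^ (-η)
  have hK0 : 0 ≤ K := (mul_nonneg (by positivity) (setIntegral_nonneg
    (measurableSet_le measurable_const measurable_norm) fun u _ => abs_nonneg (f u))).trans (hK 0)
  have htail : ∫ u in {u | ‖z‖ / 2 ≤ ‖u‖}, |f u| ≤ K * √(1 + (‖z‖ / 2) ^ 2) ^ (-η) := by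
    have h := hK ((2⁻¹ : ℝ) • z)
    rw [norm_smul, norm_inv, Real.norm_two, inv_mul_eq_div] at h
    exact le_mul_rpow_neg_of_rpow_mul_le (by positivity) h
  rw [← integral_add_compl (measurableSet_le measurable_const measurable_norm)
    (integrable_abs_comp_sub_mul_rpow_neg hf hη l z)]
  calc _ ≤ 2 ^ η * W * (∫ u, |f u|) +
        √(1 + l ^ 2) ^ (-η) * (K * √(1 + (‖z‖ / 2) ^ 2) ^ (-η)) :=
        add_le_add (setIntegral_weightedConv_near_le hf hη hl z)
          ((setIntegral_weightedConv_far_le hf hη hl z).trans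
            (mul_le_mul_of_nonneg_left htail (by positivity)))
    _ = 2 ^ η * W * (∫ u, |f u|) + K * (√(1 + l ^ 2) ^ (-η) * √(1 + (‖z‖ / 2) ^ 2) ^ (-η)) := by
        ring
    _ ≤ 2 ^ η * W * (∫ u, |f u|) + K * ((2 * √2) ^ η * W) :=
        add_le_add_right (mul_le_mul_of_nonneg_left
          (sqrt_one_add_sq_rpow_neg_mul_le hη l (norm_nonneg z)) hK0) _
    _ ≤ _ := by
        have : 0 ≤ 2 ^ η * W * K + (2 * √2) ^ η * W * (∫ u, |f u|) := by positivity
        linear_combination this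
end

section
/- Let s ∈ (0,1), t > 0, and ξ, η ∈ ℝᵈ. Then ∫₀ᵗ |τξ - η|^{2s} dτ ≥ c · t·(|η| + t|ξ|)^{2s} for a constant c > 0 depending only on s. More precisely: if |η| ≤ (t/2)|ξ| then ∫_{9t/10}^{t} |τξ - η|^{2s} dτ ≳ t·(t|ξ|)^{2s}, while if |η| ≥ (t/2)|ξ| then ∫₀^{t/10} |τξ - η|^{2s} dτ ≳ t·|η|^{2s}. -/
/-!
On `[9t/10, t]` the reverse triangle inequality gives `|τξ - η| ≥ τ|ξ| - |η| ≥ (2/5) t|ξ|` when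
`|η| ≤ (t/2)|ξ|`, and on `[0, t/10]` it gives `|τξ - η| ≥ |η| - τ|ξ| ≥ (4/5)|η|` when
`|η| ≥ (t/2)|ξ|`. In either regime `(4/15)(|η| + t|ξ|)` is below that pointwise bound, so
integrating over an interval of length `t/10` gives all three estimates with
`c = (4/15)^{2s} / 10`.
-/

open MeasureTheory Real Set

section

variable {E : Type*} [NormedAddCommGroup E] [NormedSpace ℝ E]

theorem continuous_norm_smul_sub_rpow (ξ η : E) {p : ℝ} (hp : 0 ≤ p) :
    Continuous fun τ : ℝ => ‖τ • ξ - η‖ ^ p :=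
  (by fun_prop : Continuous fun τ : ℝ => ‖τ • ξ - η‖).rpow_const fun _ => Or.inr hp

theorem mul_rpow_le_integral_norm_smul_sub_rpow {ξ η : E} {p a b m : ℝ} (hp : 0 ≤ p)
    (hab : a ≤ b) (hm : 0 ≤ m) (h : ∀ τ ∈ Icc a b, m ≤ ‖τ • ξ - η‖) :
    (b - a) * m ^ p ≤ ∫ τ in a..b, ‖τ • ξ - η‖ ^ p := by
  have := intervalIntegral.integral_mono_on hab (intervalIntegrable_const (μ := volume))
    ((continuous_norm_smul_sub_rpow ξ η hp).intervalIntegrable a b)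
    fun τ hτ => rpow_le_rpow hm (h τ hτ) hp
  rwa [intervalIntegral.integral_const, smul_eq_mul] at this

theorem le_norm_smul_sub_of_norm_le_half_mul {ξ η : E} {t τ : ℝ} (ht : 0 ≤ t)
    (hη : ‖η‖ ≤ t / 2 * ‖ξ‖) (hτ : 9 * t / 10 ≤ τ) :
    2 / 5 * (t * ‖ξ‖) ≤ ‖τ • ξ - η‖ := by
  have hτξ : 9 * t / 10 * ‖ξ‖ ≤ ‖τ • ξ‖ := by
    rw [norm_smul, norm_of_nonneg (by linarith)]
    exact mul_le_mul_of_nonneg_right hτ (norm_nonneg ξ)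
  linarith [norm_sub_norm_le (τ • ξ) η]

theorem le_norm_smul_sub_of_half_mul_le_norm {ξ η : E} {t τ : ℝ}
    (hη : t / 2 * ‖ξ‖ ≤ ‖η‖) (hτ : τ ∈ Icc 0 (t / 10)) :
    4 / 5 * ‖η‖ ≤ ‖τ • ξ - η‖ := by
  have hτξ : ‖τ • ξ‖ ≤ t / 10 * ‖ξ‖ := by
    rw [norm_smul, norm_of_nonneg hτ.1]
    exact mul_le_mul_of_nonneg_right hτ.2 (norm_nonneg ξ)
  linarith [norm_sub_norm_le η (τ • ξ), norm_sub_rev η (τ • ξ)]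

theorem le_integral_norm_smul_sub_rpow_of_norm_le_half_mul {ξ η : E} {p t X : ℝ} (hp : 0 ≤ p)
    (ht : 0 ≤ t) (hη : ‖η‖ ≤ t / 2 * ‖ξ‖) (hX : 0 ≤ X) (hXle : X ≤ 3 / 2 * (t * ‖ξ‖)) :
    (4 / 15) ^ p / 10 * (t * X ^ p) ≤ ∫ τ in (9 * t / 10)..t, ‖τ • ξ - η‖ ^ p :=
  calc _ = (t - 9 * t / 10) * (4 / 15 * X) ^ p := by rw [mul_rpow (by norm_num) hX]; ring
    _ ≤ _ := mul_rpow_le_integral_norm_smul_sub_rpow hp (by linarith) (by positivity)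
        fun τ hτ => by linarith [le_norm_smul_sub_of_norm_le_half_mul ht hη hτ.1]

theorem le_integral_norm_smul_sub_rpow_of_half_mul_le_norm {ξ η : E} {p t X : ℝ} (hp : 0 ≤ p)
    (ht : 0 ≤ t) (hη : t / 2 * ‖ξ‖ ≤ ‖η‖) (hX : 0 ≤ X) (hXle : X ≤ 3 * ‖η‖) :
    (4 / 15) ^ p / 10 * (t * X ^ p) ≤ ∫ τ in (0:ℝ)..(t / 10), ‖τ • ξ - η‖ ^ p :=
  calc _ = (t / 10 - 0) * (4 / 15 * X) ^ p := by rw [mul_rpow (by norm_num) hX]; ring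
    _ ≤ _ := mul_rpow_le_integral_norm_smul_sub_rpow hp (by linarith) (by positivity)
        fun τ hτ => by linarith [le_norm_smul_sub_of_half_mul_le_norm hη hτ]

end

/-- Lower bound for the time-integrated fractional symbol:
`∫₀ᵗ |τξ - η|^{2s} dτ ≥ c t (|η| + t|ξ|)^{2s}`, together with the two localized versions:
if `|η| ≤ (t/2)|ξ|` then `∫_{9t/10}^t |τξ-η|^{2s} dτ ≳ t (t|ξ|)^{2s}`, and
if `|η| ≥ (t/2)|ξ|` then `∫₀^{t/10} |τξ-η|^{2s} dτ ≳ t |η|^{2s}`. -/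
theorem stmt13 (d : ℕ) (s : ℝ) (hs : s ∈ Set.Ioo (0:ℝ) 1) :
    ∃ c : ℝ, 0 < c ∧ ∀ t : ℝ, 0 < t → ∀ ξ η : EuclideanSpace ℝ (Fin d),
      (c * (t * (‖η‖ + t * ‖ξ‖) ^ (2 * s)) ≤ ∫ τ in (0:ℝ)..t, ‖τ • ξ - η‖ ^ (2 * s)) ∧
      (‖η‖ ≤ t / 2 * ‖ξ‖ →
        c * (t * (t * ‖ξ‖) ^ (2 * s)) ≤ ∫ τ in (9 * t / 10)..t, ‖τ • ξ - η‖ ^ (2 * s)) ∧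
      (t / 2 * ‖ξ‖ ≤ ‖η‖ →
        c * (t * ‖η‖ ^ (2 * s)) ≤ ∫ τ in (0:ℝ)..(t / 10), ‖τ • ξ - η‖ ^ (2 * s)) := by
  have hp : 0 ≤ 2 * s := by linarith [hs.1]
  refine ⟨(4 / 15) ^ (2 * s) / 10, by positivity, fun t ht ξ η => ?_⟩
  have hnonneg : ∀ τ : ℝ, 0 ≤ ‖τ • ξ - η‖ ^ (2 * s) := fun τ => by positivity
  have hint : IntervalIntegrable (fun τ : ℝ => ‖τ • ξ - η‖ ^ (2 * s)) volume 0 t :=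
    (continuous_norm_smul_sub_rpow ξ η hp).intervalIntegrable 0 t
  refine ⟨?_,
    fun hη => le_integral_norm_smul_sub_rpow_of_norm_le_half_mul hp ht.le hη (by positivity)
      (by nlinarith [norm_nonneg ξ]),
    fun hη => le_integral_norm_smul_sub_rpow_of_half_mul_le_norm hp ht.le hη (norm_nonneg η)
      (by linarith [norm_nonneg η])⟩
  rcases le_total ‖η‖ (t / 2 * ‖ξ‖) with hη | hη
  · calc _ ≤ ∫ τ in (9 * t / 10)..t, ‖τ • ξ - η‖ ^ (2 * s) :=
          le_integral_norm_smul_sub_rpow_of_norm_le_half_mul hp ht.le hη (by positivity)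
            (by linarith)
      _ ≤ _ := intervalIntegral.integral_mono_interval (by linarith) (by linarith) le_rfl
          (.of_forall hnonneg) hint
  · calc _ ≤ ∫ τ in (0:ℝ)..(t / 10), ‖τ • ξ - η‖ ^ (2 * s) :=
          le_integral_norm_smul_sub_rpow_of_half_mul_le_norm hp ht.le hη (by positivity)
            (by linarith)
      _ ≤ _ := intervalIntegral.integral_mono_interval le_rfl (by linarith) (by linarith)
          (.of_forall hnonneg) hint
end

section
/- For t ∈ (0,1], σ > 0 and the kernel bound structure K(t,τ) = t^{-1}(t/τ)^{σ} for 0 < t < τ and K(t,τ) = t^{-1/2}τ^{-1/2} for 0 < τ < t: the Duhamel integral satisfies ∫₀ᵗ K(t-τ, τ) dτ ≤ C (depending only on σ ∈ (0,1)), uniformly in t ∈ (0,1]. -/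
open MeasureTheory Real Set

/-!
Split `(0, t)` at `t/2`. On `(t/2, t)` the kernel equals `(t-τ)^(σ-1) τ^(-σ) ≤ (t/2)^(-σ) (t-τ)^(σ-1)`,
and on `(0, t/2]` it is at most `(t/2)^(-1/2) τ^(-1/2)`. Both majorants are integrable power
singularities (`σ > 0`), and their integrals over `(0, t)` are `2^σ/σ` and `2·√2`: the factors
`(t/2)^(-σ)` and `(t/2)^(-1/2)` exactly cancel the `t^σ` and `t^(1/2)` produced by integration,
which is the scale invariance behind the uniformity in `t`.
-/

noncomputable def duhamelKernel (σ u τ : ℝ) : ℝ :=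
  if u < τ then u⁻¹ * (u / τ) ^ σ else u ^ (-(1:ℝ) / 2) * τ ^ (-(1:ℝ) / 2)

noncomputable def duhamelMajorant (σ t τ : ℝ) : ℝ :=
  (t / 2) ^ (-(1:ℝ) / 2) * τ ^ (-(1:ℝ) / 2) + (t / 2) ^ (-σ) * (t - τ) ^ (σ - 1)

lemma duhamelKernel_nonneg (σ : ℝ) {u τ : ℝ} (hu : 0 ≤ u) (hτ : 0 ≤ τ) :
    0 ≤ duhamelKernel σ u τ := by
  unfold duhamelKernel
  split_ifs <;> positivity

lemma inv_mul_div_rpow {u τ : ℝ} (σ : ℝ) (hu : 0 < u) (hτ : 0 ≤ τ) :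
    u⁻¹ * (u / τ) ^ σ = u ^ (σ - 1) * τ ^ (-σ) := by
  rw [div_rpow hu.le hτ, rpow_sub hu, rpow_one, rpow_neg hτ]
  ring

lemma duhamelKernel_le_duhamelMajorant {σ t τ : ℝ} (hσ : 0 ≤ σ) (hτ : τ ∈ Ioo 0 t) :
    duhamelKernel σ (t - τ) τ ≤ duhamelMajorant σ t τ := by
  obtain ⟨hτ0, hτt⟩ := hτ
  have hu : 0 < t - τ := sub_pos.2 hτt
  have ht2 : 0 < t / 2 := by linarith
  have hfirst_nonneg : 0 ≤ (t / 2) ^ (-(1:ℝ) / 2) * τ ^ (-(1:ℝ) / 2) := by positivity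
  have hsecond_nonneg : 0 ≤ (t / 2) ^ (-σ) * (t - τ) ^ (σ - 1) := by positivity
  unfold duhamelKernel duhamelMajorant
  split_ifs with h
  · have hτ_pow : τ ^ (-σ) ≤ (t / 2) ^ (-σ) :=
      rpow_le_rpow_of_nonpos ht2 (by linarith) (neg_nonpos.2 hσ)
    calc (t - τ)⁻¹ * ((t - τ) / τ) ^ σ = (t - τ) ^ (σ - 1) * τ ^ (-σ) :=
          inv_mul_div_rpow σ hu hτ0.le
      _ ≤ (t - τ) ^ (σ - 1) * (t / 2) ^ (-σ) := by gcongr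
      _ ≤ _ := by linarith
  · have hu_pow : (t - τ) ^ (-(1:ℝ) / 2) ≤ (t / 2) ^ (-(1:ℝ) / 2) :=
      rpow_le_rpow_of_nonpos ht2 (by linarith) (by norm_num)
    calc (t - τ) ^ (-(1:ℝ) / 2) * τ ^ (-(1:ℝ) / 2)
        ≤ (t / 2) ^ (-(1:ℝ) / 2) * τ ^ (-(1:ℝ) / 2) := by gcongr
      _ ≤ _ := by linarith

lemma setIntegral_Ioo_eq_intervalIntegral {t : ℝ} (ht : 0 ≤ t) (f : ℝ → ℝ) :
    ∫ τ in Ioo 0 t, f τ = ∫ τ in (0:ℝ)..t, f τ := by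
  rw [intervalIntegral.integral_of_le ht, integral_Ioc_eq_integral_Ioo]

lemma integrableOn_Ioo_sub_rpow {r t : ℝ} (hr : -1 < r) (ht : 0 < t) :
    IntegrableOn (fun τ ↦ (t - τ) ^ r) (Ioo 0 t) := by
  have h := (intervalIntegral.intervalIntegrable_rpow' (a := 0) (b := t) hr).comp_sub_left t
  rw [sub_self, sub_zero] at h
  exact (intervalIntegrable_iff_integrableOn_Ioo_of_le ht.le).1 h.symm

lemma integral_Ioo_rpow {r t : ℝ} (hr : -1 < r) (ht : 0 ≤ t) :
    ∫ τ in Ioo 0 t, τ ^ r = t ^ (r + 1) / (r + 1) := by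
  rw [setIntegral_Ioo_eq_intervalIntegral ht, integral_rpow (Or.inl hr),
    zero_rpow (by linarith), sub_zero]

lemma integral_Ioo_sub_rpow {r t : ℝ} (hr : -1 < r) (ht : 0 ≤ t) :
    ∫ τ in Ioo 0 t, (t - τ) ^ r = t ^ (r + 1) / (r + 1) := by
  rw [setIntegral_Ioo_eq_intervalIntegral ht,
    intervalIntegral.integral_comp_sub_left (fun x ↦ x ^ r), sub_self, sub_zero,
    ← setIntegral_Ioo_eq_intervalIntegral ht, integral_Ioo_rpow hr ht]

lemma half_rpow_neg_mul_rpow {t : ℝ} (r : ℝ) (ht : 0 < t) : (t / 2) ^ (-r) * t ^ r = 2 ^ r := by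
  rw [rpow_neg (by positivity), div_rpow ht.le zero_le_two]
  field_simp

lemma integrableOn_duhamelMajorant {σ t : ℝ} (hσ : 0 < σ) (ht : 0 < t) :
    IntegrableOn (duhamelMajorant σ t) (Ioo 0 t) :=
  (((intervalIntegral.integrableOn_Ioo_rpow_iff ht).2 (by norm_num)).const_mul _).add
    ((integrableOn_Ioo_sub_rpow (by linarith) ht).const_mul _)

lemma integral_duhamelMajorant {σ t : ℝ} (hσ : 0 < σ) (ht : 0 < t) :
    ∫ τ in Ioo 0 t, duhamelMajorant σ t τ = 2 * 2 ^ ((1:ℝ) / 2) + 2 ^ σ / σ := by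
  have hfirst : ∫ τ in Ioo 0 t, (t / 2) ^ (-(1:ℝ) / 2) * τ ^ (-(1:ℝ) / 2)
      = 2 * 2 ^ ((1:ℝ) / 2) := by
    rw [integral_const_mul, integral_Ioo_rpow (by norm_num) ht.le,
      show -(1:ℝ) / 2 + 1 = 1 / 2 by norm_num, show -(1:ℝ) / 2 = -(1 / 2) by ring,
      mul_div_assoc', half_rpow_neg_mul_rpow _ ht]
    ring
  have hsecond : ∫ τ in Ioo 0 t, (t / 2) ^ (-σ) * (t - τ) ^ (σ - 1) = 2 ^ σ / σ := by
    rw [integral_const_mul, integral_Ioo_sub_rpow (by linarith) ht.le, sub_add_cancel,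
      mul_div_assoc', half_rpow_neg_mul_rpow _ ht]
  unfold duhamelMajorant
  rw [integral_add (((intervalIntegral.integrableOn_Ioo_rpow_iff ht).2 (by norm_num)).const_mul _)
      ((integrableOn_Ioo_sub_rpow (by linarith) ht).const_mul _), hfirst, hsecond]

/-- Uniform-in-time integrability of the singular Duhamel kernel bound: for `σ ∈ (0,1)`,
`∫₀ᵗ K(t-τ, τ) dτ ≤ C` uniformly in `t ∈ (0,1]`, where `K(u,τ) = u^{-1}(u/τ)^σ` for
`u < τ` and `K(u,τ) = u^{-1/2} τ^{-1/2}` for `τ < u`. -/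
theorem stmt19 (σ : ℝ) (hσ : σ ∈ Set.Ioo (0:ℝ) 1) :
    ∃ C : ℝ, 0 < C ∧ ∀ t ∈ Set.Ioc (0:ℝ) 1,
      (∫ τ in Set.Ioo (0:ℝ) t,
          if t - τ < τ then (t - τ)⁻¹ * ((t - τ) / τ) ^ σ
          else (t - τ) ^ (-(1:ℝ) / 2) * τ ^ (-(1:ℝ) / 2)) ≤ C := by
  obtain ⟨hσ0, -⟩ := hσ
  refine ⟨2 * 2 ^ ((1:ℝ) / 2) + 2 ^ σ / σ, by positivity, fun t ⟨ht0, _⟩ ↦ ?_⟩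
  calc ∫ τ in Ioo 0 t, duhamelKernel σ (t - τ) τ
      ≤ ∫ τ in Ioo 0 t, duhamelMajorant σ t τ :=
        setIntegral_mono_of_nonneg
          (fun τ hτ ↦ duhamelKernel_nonneg σ (sub_pos.2 hτ.2).le hτ.1.le)
          (fun τ hτ ↦ duhamelKernel_le_duhamelMajorant hσ0.le hτ)
          (integrableOn_duhamelMajorant hσ0 ht0)
    _ = _ := integral_duhamelMajorant hσ0 ht0
end
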